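/- arXiv:2410.16468 — 3 statements merged into one kernel-verified Lean document; each statement's English description precedes it below -/
import Mathlib

section
/- For all s, t, r > 0, the integral ∫_{ℝⁿ} ( G_{3t/4} ∗ (G_{t/4+r})² )^{1/2}(x) dx is bounded by C·((7t+4r)/(2t+8r))^{n/4} for a constant C depending only on n; in particular this integral is bounded uniformly in t and r. -/
open MeasureTheory Metric Real

/-- The Gaussian heat kernel `G_t(x) = (4πt)^{-n/2} exp(-|x|²/(4t))` on ℝⁿ. -/
noncomputable def heatKernel (n : ℕ) (t : ℝ) (x : EuclideanSpace ℝ (Fin n)) : ℝ :=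
  (4 * π * t) ^ (-(n : ℝ) / 2) * Real.exp (-‖x‖ ^ 2 / (4 * t))

/-!
Everything is an explicit Gaussian computation. Squaring a heat kernel halves its time up to a
constant, `G_b² = (8πb)^{-n/2} G_{b/2}`, and the semigroup law `G_a ∗ G_c = G_{a+c}` gives
`G_a ∗ G_b² = (8πb)^{-n/2} G_{a+b/2}`. Taking a square root doubles the time,
`√G_c = (16πc)^{n/4} G_{2c}`, and `∫ G_{2c} = 1`, so the integral equals `((2a+b)/b)^{n/4}`.
For `a = 3t/4`, `b = t/4 + r` this is exactly `2^{n/4} ((7t+4r)/(2t+8r))^{n/4}`.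
-/

namespace heatKernel

variable {n : ℕ}

theorem integral_eq_one {t : ℝ} (ht : 0 < t) :
    ∫ x : EuclideanSpace ℝ (Fin n), heatKernel n t x = 1 := by
  have h4πt : 0 < 4 * π * t := by positivity
  have hexp : ∀ x : EuclideanSpace ℝ (Fin n),
      Real.exp (-‖x‖ ^ 2 / (4 * t)) = Real.exp (-(4 * t)⁻¹ * ‖x‖ ^ 2) := fun x => by
    congr 1; ring
  simp only [heatKernel, hexp]
  rw [integral_const_mul, GaussianFourier.integral_rexp_neg_mul_sq_norm (by positivity),
    finrank_euclideanSpace_fin, show π / (4 * t)⁻¹ = 4 * π * t by field_simp, neg_div,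
    rpow_neg h4πt.le, inv_mul_cancel₀ (by positivity)]

theorem nonneg {t : ℝ} (ht : 0 ≤ t) (x : EuclideanSpace ℝ (Fin n)) :
    0 ≤ heatKernel n t x := by
  unfold heatKernel
  positivity

theorem sq_eq {t : ℝ} (ht : 0 < t) (x : EuclideanSpace ℝ (Fin n)) :
    heatKernel n t x ^ 2 = (8 * π * t) ^ (-(n : ℝ) / 2) * heatKernel n (t / 2) x := by
  simp only [heatKernel]
  rw [mul_pow, sq ((4 * π * t) ^ _), ← mul_rpow (by positivity) (by positivity),
    ← mul_assoc ((8 * π * t) ^ _), ← mul_rpow (by positivity) (by positivity), ← exp_nat_mul]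
  congr 2
  · ring
  · push_cast; field_simp

theorem sqrt_eq {t : ℝ} (ht : 0 < t) (x : EuclideanSpace ℝ (Fin n)) :
    √(heatKernel n t x) = (16 * π * t) ^ ((n : ℝ) / 4) * heatKernel n (2 * t) x := by
  have h16 : 0 < 16 * π * t := by positivity
  have hsq : heatKernel n t x = (16 * π * t) ^ ((n : ℝ) / 2) * heatKernel n (2 * t) x ^ 2 := by
    rw [sq_eq (by positivity), mul_div_cancel_left₀ t two_ne_zero, ← mul_assoc,
      show 8 * π * (2 * t) = 16 * π * t by ring, ← rpow_add h16, neg_div, add_neg_cancel,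
      rpow_zero, one_mul]
  rw [hsq, sqrt_mul (by positivity), sqrt_sq (nonneg (by positivity) _), sqrt_eq_rpow,
    ← rpow_mul h16.le]
  ring_nf

-- Completing the square in `y`; the two time constants combine as `a + c` and `ac/(a+c)`.
theorem mul_eq_mul_sub {a c : ℝ} (ha : 0 < a) (hc : 0 < c) (x y : EuclideanSpace ℝ (Fin n)) :
    heatKernel n a (x - y) * heatKernel n c y
      = heatKernel n (a + c) x * heatKernel n (a * c / (a + c)) (y - (c / (a + c)) • x) := by
  have hac : 0 < a + c := by positivity
  have hconst : (4 * π * a) ^ (-(n : ℝ) / 2) * (4 * π * c) ^ (-(n : ℝ) / 2)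
      = (4 * π * (a + c)) ^ (-(n : ℝ) / 2) * (4 * π * (a * c / (a + c))) ^ (-(n : ℝ) / 2) := by
    rw [← mul_rpow (by positivity) (by positivity), ← mul_rpow (by positivity) (by positivity)]
    congr 1
    field_simp
  have hsq : ‖y - (c / (a + c)) • x‖ ^ 2
      = ‖y‖ ^ 2 - 2 * (c / (a + c)) * inner ℝ x y + (c / (a + c)) ^ 2 * ‖x‖ ^ 2 := by
    rw [norm_sub_sq_real, real_inner_smul_right, real_inner_comm, norm_smul, mul_pow,
      Real.norm_eq_abs, sq_abs]
    ring
  have hexp : -‖x - y‖ ^ 2 / (4 * a) + -‖y‖ ^ 2 / (4 * c)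
      = -‖x‖ ^ 2 / (4 * (a + c)) + -‖y - (c / (a + c)) • x‖ ^ 2 / (4 * (a * c / (a + c))) := by
    rw [norm_sub_sq_real, hsq]
    field_simp
    ring
  simp only [heatKernel]
  calc _ = (4 * π * a) ^ (-(n : ℝ) / 2) * (4 * π * c) ^ (-(n : ℝ) / 2)
        * rexp (-‖x - y‖ ^ 2 / (4 * a) + -‖y‖ ^ 2 / (4 * c)) := by rw [exp_add]; ring
    _ = _ := by rw [hconst, hexp, exp_add]; ring

theorem integral_sub_mul {a c : ℝ} (ha : 0 < a) (hc : 0 < c) (x : EuclideanSpace ℝ (Fin n)) :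
    ∫ y, heatKernel n a (x - y) * heatKernel n c y = heatKernel n (a + c) x := by
  simp only [mul_eq_mul_sub ha hc x]
  rw [integral_const_mul,
    integral_sub_right_eq_self (fun z => heatKernel n (a * c / (a + c)) z) ((c / (a + c)) • x),
    integral_eq_one (by positivity), mul_one]

theorem integral_sqrt_integral_sub_mul_sq {a b : ℝ} (ha : 0 < a) (hb : 0 < b) :
    ∫ x : EuclideanSpace ℝ (Fin n), √(∫ y, heatKernel n a (x - y) * heatKernel n b y ^ 2)
      = ((2 * a + b) / b) ^ ((n : ℝ) / 4) := by
  have h8 : 0 < 8 * π * b := by positivity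
  have hinner : ∀ x : EuclideanSpace ℝ (Fin n),
      ∫ y, heatKernel n a (x - y) * heatKernel n b y ^ 2
        = (8 * π * b) ^ (-(n : ℝ) / 2) * heatKernel n (a + b / 2) x := fun x => by
    simp only [sq_eq hb, mul_left_comm (heatKernel n a _)]
    rw [integral_const_mul, integral_sub_mul ha (by positivity)]
  simp only [hinner, sqrt_mul (rpow_nonneg h8.le _), sqrt_eq (show 0 < a + b / 2 by positivity)]
  rw [integral_const_mul, integral_const_mul, integral_eq_one (by positivity), mul_one,
    sqrt_eq_rpow, ← rpow_mul h8.le, show -(n : ℝ) / 2 * (1 / 2) = -((n : ℝ) / 4) by ring,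
    rpow_neg h8.le, ← div_eq_inv_mul, ← div_rpow (by positivity) h8.le]
  congr 1
  field_simp
  ring

end heatKernel

theorem stmt2_general (n : ℕ) :
    ∃ C : ℝ, 0 < C ∧ ∀ s t r : ℝ, 0 < s → 0 < t → 0 < r →
      ∫ x : EuclideanSpace ℝ (Fin n),
          Real.sqrt (∫ y, heatKernel n (3 * t / 4) (x - y) * (heatKernel n (t / 4 + r) y) ^ 2)
        ≤ C * ((7 * t + 4 * r) / (2 * t + 8 * r)) ^ ((n : ℝ) / 4) := by
  refine ⟨2 ^ ((n : ℝ) / 4), by positivity, fun _ t r _ ht hr => le_of_eq ?_⟩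
  rw [heatKernel.integral_sqrt_integral_sub_mul_sq (by positivity) (by positivity),
    ← mul_rpow zero_le_two (by positivity)]
  congr 1
  field_simp
  ring

/-- for all `s, t, r > 0`,
`∫ (G_{3t/4} ∗ (G_{t/4+r})²)^{1/2}(x) dx ≤ C ((7t+4r)/(2t+8r))^{n/4}`
with `C` depending only on `n`; in particular the integral is bounded uniformly in `t, r`. -/
theorem stmt2 (n : ℕ) (hn : 1 ≤ n) :
    ∃ C : ℝ, 0 < C ∧ ∀ s t r : ℝ, 0 < s → 0 < t → 0 < r →
      ∫ x : EuclideanSpace ℝ (Fin n),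
          Real.sqrt (∫ y, heatKernel n (3 * t / 4) (x - y) * (heatKernel n (t / 4 + r) y) ^ 2)
        ≤ C * ((7 * t + 4 * r) / (2 * t + 8 * r)) ^ ((n : ℝ) / 4) :=
  stmt2_general n
end

section
/- Let ψ_t(x) := t^{-n/2} ψ(t^{-1/2} x) satisfy the pointwise Gaussian bound |ψ_t(x)| ≤ C₀ G_t(x) for all t > 0 and x ∈ ℝⁿ. Then there exists C depending only on n and C₀ such that for every H¹-atom a (supported in a ball B with ‖a‖_∞ ≤ |B|^{-1} and ∫ a = 0), sup_{t>0} ∫_{ℝⁿ} ( G_{3t/4} ∗ |ψ_{t/4} ∗ a|² )^{1/2}(x) dx ≤ C. -/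
/-!
An atom supported in `B(x₀, r)` is dominated by `C(n) G_{r²}(· - x₀)`. By the semigroup property
`G_s ∗ G_t = G_{s+t}`, the Gaussian bound on `ψ_{t/4}` then gives `|ψ_{t/4} ∗ a| ≲ G_s(· - x₀)` with
`s = t/4 + r²`. Since `G_s²` is a multiple of `G_{s/2}`, the function `G_{3t/4} ∗ |ψ_{t/4} ∗ a|²` is
dominated by a multiple of the single heat kernel `G_{3t/4 + s/2}`, whose square root integrates
explicitly. The resulting bound depends only on the ratio `(3t/2 + s)/s ≤ 7`.
-/

open MeasureTheory Metric Real

/-- The parabolic rescaling `ψ_t(x) = t^{-n/2} ψ(t^{-1/2} x)`. -/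
noncomputable def rescale (n : ℕ) (ψ : EuclideanSpace ℝ (Fin n) → ℝ) (t : ℝ)
    (x : EuclideanSpace ℝ (Fin n)) : ℝ :=
  t ^ (-(n : ℝ) / 2) * ψ ((t ^ (-(1 : ℝ) / 2)) • x)

section HeatKernel

variable {n : ℕ}

local notation "E" => EuclideanSpace ℝ (Fin n)

theorem heatKernel_pos {t : ℝ} (ht : 0 < t) (x : E) : 0 < heatKernel n t x := by
  unfold heatKernel; positivity

theorem integral_heatKernel {t : ℝ} (ht : 0 < t) : ∫ x : E, heatKernel n t x = 1 := by
  have hb : 0 < (4 * t)⁻¹ := by positivity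
  have hgauss := GaussianFourier.integral_rexp_neg_mul_sq_norm (V := E) hb
  rw [finrank_euclideanSpace_fin, div_inv_eq_mul] at hgauss
  simp_rw [heatKernel, neg_div, div_eq_inv_mul _ (4 * t), ← neg_mul]
  rw [integral_const_mul, hgauss, show π * (4 * t) = 4 * π * t by ring,
    Real.rpow_neg (by positivity), inv_mul_cancel₀ (by positivity)]

theorem integrable_heatKernel {t : ℝ} (ht : 0 < t) : Integrable (heatKernel n t : E → ℝ) :=
  Integrable.of_integral_ne_zero (by rw [integral_heatKernel ht]; exact one_ne_zero)

theorem norm_sub_sq_div_add_norm_sub_sq_div {s t : ℝ} (hs : 0 < s) (ht : 0 < t) (x y z : E) :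
    ‖x - y‖ ^ 2 / s + ‖y - z‖ ^ 2 / t =
      ‖x - z‖ ^ 2 / (s + t) +
        ‖y - ((t / (s + t)) • x + (s / (s + t)) • z)‖ ^ 2 / (s * t / (s + t)) := by
  have hst : 0 < s + t := by positivity
  simp only [← real_inner_self_eq_norm_sq, inner_sub_left, inner_sub_right, inner_add_left,
    inner_add_right, real_inner_smul_left, real_inner_smul_right, real_inner_comm x y,
    real_inner_comm x z, real_inner_comm y z]
  field_simp
  ring

theorem heatKernel_mul_heatKernel {s t : ℝ} (hs : 0 < s) (ht : 0 < t) (x y z : E) :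
    heatKernel n s (x - y) * heatKernel n t (y - z) =
      heatKernel n (s + t) (x - z) *
        heatKernel n (s * t / (s + t)) (y - ((t / (s + t)) • x + (s / (s + t)) • z)) := by
  have hst : 0 < s + t := by positivity
  have hconst : (4 * π * s) * (4 * π * t) = (4 * π * (s + t)) * (4 * π * (s * t / (s + t))) := by
    field_simp
  have hexp := norm_sub_sq_div_add_norm_sub_sq_div hs ht x y z
  unfold heatKernel
  rw [mul_mul_mul_comm, mul_mul_mul_comm ((4 * π * (s + t)) ^ (-(n : ℝ) / 2)),
    ← Real.mul_rpow (by positivity) (by positivity), ← Real.mul_rpow (by positivity)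
    (by positivity), hconst, ← Real.exp_add, ← Real.exp_add]
  congr 2
  have hquarter (q p : ℝ) : -q / (4 * p) = -(q / p) / 4 := by ring
  simp only [hquarter]
  linarith

theorem integral_heatKernel_mul_heatKernel {s t : ℝ} (hs : 0 < s) (ht : 0 < t) (x z : E) :
    ∫ y, heatKernel n s (x - y) * heatKernel n t (y - z) = heatKernel n (s + t) (x - z) := by
  simp_rw [heatKernel_mul_heatKernel hs ht x _ z]
  rw [integral_const_mul, integral_sub_right_eq_self (heatKernel n _),
    integral_heatKernel (by positivity), mul_one]

theorem integrable_heatKernel_mul_heatKernel {s t : ℝ} (hs : 0 < s) (ht : 0 < t) (x z : E) :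
    Integrable fun y => heatKernel n s (x - y) * heatKernel n t (y - z) := by
  simp_rw [heatKernel_mul_heatKernel hs ht x _ z]
  exact ((integrable_heatKernel (by positivity)).comp_sub_right _).const_mul _

theorem heatKernel_sq {t : ℝ} (ht : 0 < t) (x : E) :
    heatKernel n t x ^ 2 = (8 * π * t) ^ (-(n : ℝ) / 2) * heatKernel n (t / 2) x := by
  unfold heatKernel
  rw [mul_pow, sq, ← Real.mul_rpow (by positivity) (by positivity),
    show 4 * π * t * (4 * π * t) = 8 * π * t * (4 * π * (t / 2)) by ring,
    Real.mul_rpow (by positivity) (by positivity), sq, ← Real.exp_add, mul_assoc]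
  congr 3
  field_simp
  ring

theorem sqrt_heatKernel {t : ℝ} (ht : 0 < t) (x : E) :
    √(heatKernel n t x) = (16 * π * t) ^ ((n : ℝ) / 4) * heatKernel n (2 * t) x := by
  have hsq := heatKernel_sq (n := n) (by positivity : 0 < 2 * t) x
  rw [show 8 * π * (2 * t) = 16 * π * t by ring, mul_div_cancel_left₀ t two_ne_zero] at hsq
  have hpow : ((16 * π * t) ^ ((n : ℝ) / 4)) ^ 2 * (16 * π * t) ^ (-(n : ℝ) / 2) = 1 := by
    rw [← Real.rpow_natCast, ← Real.rpow_mul (by positivity), ← Real.rpow_add (by positivity)]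
    ring_nf
    exact Real.rpow_zero _
  rw [← Real.sqrt_sq (mul_nonneg (by positivity) (heatKernel_pos (by positivity) x).le),
    mul_pow, hsq, ← mul_assoc, hpow, one_mul]

theorem integral_sqrt_heatKernel {t : ℝ} (ht : 0 < t) :
    ∫ x : E, √(heatKernel n t x) = (16 * π * t) ^ ((n : ℝ) / 4) := by
  simp_rw [sqrt_heatKernel ht]
  rw [integral_const_mul, integral_heatKernel (by positivity), mul_one]

theorem abs_integral_mul_le_heatKernel {k f : E → ℝ} {s r α β : ℝ} (hs : 0 < s) (hr : 0 < r)
    {x₀ : E} (hk : ∀ v, |k v| ≤ α * heatKernel n s v)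
    (hf : ∀ z, |f z| ≤ β * heatKernel n r (z - x₀)) (y : E) :
    |∫ z, k (y - z) * f z| ≤ α * β * heatKernel n (s + r) (y - x₀) := by
  calc |∫ z, k (y - z) * f z|
      ≤ ∫ z, |k (y - z) * f z| := abs_integral_le_integral_abs
    _ ≤ ∫ z, α * β * (heatKernel n s (y - z) * heatKernel n r (z - x₀)) := by
        refine integral_mono_of_nonneg (.of_forall fun z => abs_nonneg _)
          ((integrable_heatKernel_mul_heatKernel hs hr y x₀).const_mul _) (.of_forall fun z => ?_)
        dsimp only
        rw [abs_mul, mul_mul_mul_comm]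
        exact mul_le_mul (hk _) (hf z) (abs_nonneg _) ((abs_nonneg _).trans (hk _))
    _ = α * β * heatKernel n (s + r) (y - x₀) := by
        rw [integral_const_mul, integral_heatKernel_mul_heatKernel hs hr]

theorem integral_heatKernel_mul_sq_le {F : E → ℝ} {u s M : ℝ} (hu : 0 < u) (hs : 0 < s)
    {x₀ : E} (hF : ∀ y, |F y| ≤ M * heatKernel n s (y - x₀)) (x : E) :
    ∫ y, heatKernel n u (x - y) * F y ^ 2 ≤
      M ^ 2 * (8 * π * s) ^ (-(n : ℝ) / 2) * heatKernel n (u + s / 2) (x - x₀) := by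
  calc ∫ y, heatKernel n u (x - y) * F y ^ 2
      ≤ ∫ y, M ^ 2 * (8 * π * s) ^ (-(n : ℝ) / 2) *
          (heatKernel n u (x - y) * heatKernel n (s / 2) (y - x₀)) := by
        refine integral_mono_of_nonneg
          (.of_forall fun y => mul_nonneg (heatKernel_pos hu _).le (sq_nonneg _))
          ((integrable_heatKernel_mul_heatKernel hu (by positivity) x x₀).const_mul _)
          (.of_forall fun y => ?_)
        have hsq : F y ^ 2 ≤ (M * heatKernel n s (y - x₀)) ^ 2 := by
          rw [← sq_abs]
          exact pow_le_pow_left₀ (abs_nonneg _) (hF y) 2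
        calc heatKernel n u (x - y) * F y ^ 2
            ≤ heatKernel n u (x - y) * (M * heatKernel n s (y - x₀)) ^ 2 :=
              mul_le_mul_of_nonneg_left hsq (heatKernel_pos hu _).le
          _ = _ := by rw [mul_pow, heatKernel_sq hs]; ring
    _ = M ^ 2 * (8 * π * s) ^ (-(n : ℝ) / 2) * heatKernel n (u + s / 2) (x - x₀) := by
        rw [integral_const_mul, integral_heatKernel_mul_heatKernel hu (by positivity)]

theorem integral_sqrt_heatKernel_conv_sq_le {F : E → ℝ} {u s M : ℝ} (hu : 0 < u) (hs : 0 < s)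
    (hM : 0 ≤ M) {x₀ : E} (hF : ∀ y, |F y| ≤ M * heatKernel n s (y - x₀)) :
    ∫ x, √(∫ y, heatKernel n u (x - y) * F y ^ 2) ≤ M * ((2 * u + s) / s) ^ ((n : ℝ) / 4) := by
  have hτ : 0 < u + s / 2 := by positivity
  have hsqrt (x : E) : √(∫ y, heatKernel n u (x - y) * F y ^ 2) ≤
      M * (8 * π * s) ^ (-(n : ℝ) / 4) * √(heatKernel n (u + s / 2) (x - x₀)) := by
    have hc : M ^ 2 * (8 * π * s) ^ (-(n : ℝ) / 2) = (M * (8 * π * s) ^ (-(n : ℝ) / 4)) ^ 2 := by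
      rw [mul_pow, ← Real.rpow_mul_natCast (by positivity)]
      ring_nf
    calc √(∫ y, heatKernel n u (x - y) * F y ^ 2)
        ≤ √(M ^ 2 * (8 * π * s) ^ (-(n : ℝ) / 2) * heatKernel n (u + s / 2) (x - x₀)) :=
          Real.sqrt_le_sqrt (integral_heatKernel_mul_sq_le hu hs hF x)
      _ = _ := by rw [Real.sqrt_mul (by positivity), hc, Real.sqrt_sq (by positivity)]
  calc ∫ x, √(∫ y, heatKernel n u (x - y) * F y ^ 2)
      ≤ ∫ x, M * (8 * π * s) ^ (-(n : ℝ) / 4) * √(heatKernel n (u + s / 2) (x - x₀)) := by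
        refine integral_mono_of_nonneg (.of_forall fun x => Real.sqrt_nonneg _) ?_
          (.of_forall hsqrt)
        simp_rw [sqrt_heatKernel hτ]
        exact (((integrable_heatKernel (by positivity)).comp_sub_right x₀).const_mul _).const_mul _
    _ = M * ((8 * π * s) ^ (-(n : ℝ) / 4) * (16 * π * (u + s / 2)) ^ ((n : ℝ) / 4)) := by
        rw [integral_const_mul, integral_sub_right_eq_self (fun x => √(heatKernel n _ x)),
          integral_sqrt_heatKernel hτ, mul_assoc]
    _ = M * ((2 * u + s) / s) ^ ((n : ℝ) / 4) := by
        rw [neg_div, Real.rpow_neg (by positivity), ← Real.inv_rpow (by positivity),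
          ← Real.mul_rpow (by positivity) (by positivity)]
        congr 2
        field_simp
        ring

theorem volume_ball_toReal (x₀ : E) {r : ℝ} (hr : 0 < r) :
    (volume (ball x₀ r)).toReal = r ^ n * (volume (ball (0 : E) 1)).toReal := by
  rw [Measure.addHaar_ball_of_pos volume x₀ hr, finrank_euclideanSpace_fin, ENNReal.toReal_mul,
    ENNReal.toReal_ofReal (by positivity)]

theorem volume_unit_ball_toReal_pos : 0 < (volume (ball (0 : E) 1)).toReal :=
  ENNReal.toReal_pos (measure_ball_pos volume 0 one_pos).ne' measure_ball_lt_top.ne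

theorem one_le_exp_mul_heatKernel {r : ℝ} (hr : 0 < r) {v : E} (hv : ‖v‖ < r) :
    1 ≤ exp (1 / 4) * (4 * π * r ^ 2) ^ ((n : ℝ) / 2) * heatKernel n (r ^ 2) v := by
  have hexp : 0 ≤ 1 / 4 + -‖v‖ ^ 2 / (4 * r ^ 2) := by
    rw [neg_div, ← sub_eq_add_neg, sub_nonneg, div_le_iff₀ (by positivity)]
    nlinarith [norm_nonneg v]
  have hcancel : (4 * π * r ^ 2) ^ ((n : ℝ) / 2) * (4 * π * r ^ 2) ^ (-(n : ℝ) / 2) = 1 := by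
    rw [← Real.rpow_add (by positivity), neg_div, add_neg_cancel, Real.rpow_zero]
  calc (1 : ℝ) = exp 0 := Real.exp_zero.symm
    _ ≤ exp (1 / 4 + -‖v‖ ^ 2 / (4 * r ^ 2)) := Real.exp_le_exp.mpr hexp
    _ = exp (1 / 4) * ((4 * π * r ^ 2) ^ ((n : ℝ) / 2) * (4 * π * r ^ 2) ^ (-(n : ℝ) / 2)) *
          exp (-‖v‖ ^ 2 / (4 * r ^ 2)) := by rw [hcancel, mul_one, Real.exp_add]
    _ = _ := by unfold heatKernel; ring

theorem abs_le_heatKernel_of_support_subset_ball {a : E → ℝ} {x₀ : E} {r : ℝ} (hr : 0 < r)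
    (hsupp : ∀ x ∉ ball x₀ r, a x = 0) (hbd : ∀ x, |a x| ≤ (volume (ball x₀ r)).toReal⁻¹)
    (z : E) :
    |a z| ≤ exp (1 / 4) * (4 * π) ^ ((n : ℝ) / 2) / (volume (ball (0 : E) 1)).toReal *
      heatKernel n (r ^ 2) (z - x₀) := by
  have hvol := volume_unit_ball_toReal_pos (n := n)
  by_cases hz : z ∈ ball x₀ r
  · have hscale : (4 * π * r ^ 2) ^ ((n : ℝ) / 2) = (4 * π) ^ ((n : ℝ) / 2) * r ^ n := by
      rw [Real.mul_rpow (by positivity) (by positivity), ← Real.rpow_natCast r 2,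
        ← Real.rpow_mul hr.le, ← Real.rpow_natCast r n]
      congr 2
      push_cast
      ring
    calc |a z| ≤ (volume (ball x₀ r)).toReal⁻¹ * 1 := by rw [mul_one]; exact hbd z
      _ ≤ (volume (ball x₀ r)).toReal⁻¹ *
          (exp (1 / 4) * (4 * π * r ^ 2) ^ ((n : ℝ) / 2) * heatKernel n (r ^ 2) (z - x₀)) :=
        mul_le_mul_of_nonneg_left (one_le_exp_mul_heatKernel hr (mem_ball_iff_norm.mp hz))
          (by positivity)
      _ = _ := by
        rw [volume_ball_toReal x₀ hr, hscale]
        field_simp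
  · rw [hsupp z hz, abs_zero]
    exact mul_nonneg (by positivity) (heatKernel_pos (by positivity) _).le

end HeatKernel

theorem stmt3_general (n : ℕ) (ψ : EuclideanSpace ℝ (Fin n) → ℝ) (C₀ : ℝ)
    (hψ : ∀ t : ℝ, 0 < t → ∀ x, |rescale n ψ t x| ≤ C₀ * heatKernel n t x) :
    ∃ C : ℝ, 0 < C ∧ ∀ a : EuclideanSpace ℝ (Fin n) → ℝ, Measurable a →
      (∃ (x₀ : EuclideanSpace ℝ (Fin n)) (r : ℝ), 0 < r ∧
        (∀ x ∉ ball x₀ r, a x = 0) ∧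
        (∀ x, |a x| ≤ ((volume (ball x₀ r)).toReal)⁻¹) ∧
        ∫ x, a x = 0) →
      ∀ t : ℝ, 0 < t →
        ∫ x, Real.sqrt (∫ y, heatKernel n (3 * t / 4) (x - y) *
            (∫ z, rescale n ψ (t / 4) (y - z) * a z) ^ 2) ≤ C := by
  set A := exp (1 / 4) * (4 * π) ^ ((n : ℝ) / 2) /
    (volume (ball (0 : EuclideanSpace ℝ (Fin n)) 1)).toReal
  have hA : 0 < A := div_pos (by positivity) volume_unit_ball_toReal_pos
  have hC₀ : 0 ≤ C₀ := nonneg_of_mul_nonneg_left ((abs_nonneg _).trans (hψ 1 one_pos 0))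
    (heatKernel_pos one_pos 0)
  refine ⟨C₀ * A * 7 ^ ((n : ℝ) / 4) + 1, by positivity, ?_⟩
  rintro a - ⟨x₀, r, hr, hsupp, hbd, -⟩ t ht
  have hF := abs_integral_mul_le_heatKernel (by positivity : 0 < t / 4) (by positivity : 0 < r ^ 2)
    (hψ (t / 4) (by positivity)) (abs_le_heatKernel_of_support_subset_ball hr hsupp hbd)
  have hratio : (2 * (3 * t / 4) + (t / 4 + r ^ 2)) / (t / 4 + r ^ 2) ≤ 7 := by
    rw [div_le_iff₀ (by positivity)]
    nlinarith
  calc _ ≤ C₀ * A * ((2 * (3 * t / 4) + (t / 4 + r ^ 2)) / (t / 4 + r ^ 2)) ^ ((n : ℝ) / 4) :=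
        integral_sqrt_heatKernel_conv_sq_le (by positivity) (by positivity) (by positivity) hF
    _ ≤ C₀ * A * 7 ^ ((n : ℝ) / 4) := by gcongr
    _ ≤ C₀ * A * 7 ^ ((n : ℝ) / 4) + 1 := le_add_of_nonneg_right zero_le_one

/-- if `ψ_t` satisfies pointwise Gaussian bounds `|ψ_t(x)| ≤ C₀ G_t(x)`, then
there is `C = C(n, C₀)` such that for every `H¹`-atom `a` (supported in a ball `B`,
`‖a‖_∞ ≤ |B|⁻¹`, `∫ a = 0`), one has
`sup_{t>0} ∫ (G_{3t/4} ∗ |ψ_{t/4} ∗ a|²)^{1/2}(x) dx ≤ C`. -/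
theorem stmt3 (n : ℕ) (hn : 1 ≤ n) (ψ : EuclideanSpace ℝ (Fin n) → ℝ) (C₀ : ℝ)
    (hψ : ∀ t : ℝ, 0 < t → ∀ x, |rescale n ψ t x| ≤ C₀ * heatKernel n t x) :
    ∃ C : ℝ, 0 < C ∧ ∀ a : EuclideanSpace ℝ (Fin n) → ℝ, Measurable a →
      (∃ (x₀ : EuclideanSpace ℝ (Fin n)) (r : ℝ), 0 < r ∧
        (∀ x ∉ ball x₀ r, a x = 0) ∧
        (∀ x, |a x| ≤ ((volume (ball x₀ r)).toReal)⁻¹) ∧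
        ∫ x, a x = 0) →
      ∀ t : ℝ, 0 < t →
        ∫ x, Real.sqrt (∫ y, heatKernel n (3 * t / 4) (x - y) *
            (∫ z, rescale n ψ (t / 4) (y - z) * a z) ^ 2) ≤ C :=
  stmt3_general n ψ C₀ hψ
end

section
/- For any measurable functions u, v on (0,∞)×ℝⁿ and β ∈ ℝ, one has ∫_0^∞ ∫_{ℝⁿ} |u(t,y)||v(t,y)| dt dy ≤ C ‖u‖_{T^{∞,1}_β} ‖v‖_{T^{1,∞}_{−β}}, where C depends only on n. -/
/-!
Put `F = t^{-β}|u|`, `f = t^{β}|v|` and `N x = esssup_{Γ(x)} f`, so that the left-hand side is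
`∫ F f`. By the layer-cake formula in `f`, it suffices to bound for every level `ℓ` the `F`-mass of
`{f > ℓ}` by `6ⁿ ‖u‖ |{N > ℓ}|`; the layer-cake formula in `N` then produces `∫ N`.
By Fubini, for a.e. `(t, y)` with `f(t, y) > ℓ` almost all of the ball `B(y, √t)` lies in
`O = {N > ℓ}`, i.e. `(t, y)` belongs to the tent over `O`. With `ρ(y)` the largest such radius at
`y`, a Vitali subfamily of the balls `B(b, ρ b)` is disjoint, almost contained in `O`, and the
boxes `(0, (6ρ b)²) × B(b, 6ρ b)` cover the tent; on each box the Carleson condition bounds the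
`F`-mass by `‖u‖ |B(b, 6ρ b)| = 6ⁿ ‖u‖ |B(b, ρ b)|`.
-/

open MeasureTheory Metric Real ENNReal

open Set Filter Topology

section LayerCake

variable {α : Type*} [MeasurableSpace α]

theorem volume_restrict_Ioi_setOf_ofReal_lt (c : ℝ≥0∞) :
    volume.restrict (Ioi (0 : ℝ)) {ℓ | ENNReal.ofReal ℓ < c} = c := by
  rw [Measure.restrict_apply (measurableSet_lt ENNReal.measurable_ofReal measurable_const)]
  rcases eq_or_ne c ⊤ with rfl | hc
  · simp [ofReal_lt_top]
  · have : {ℓ | ENNReal.ofReal ℓ < c} ∩ Ioi 0 = Ioo 0 c.toReal := by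
      ext ℓ
      simp only [mem_inter_iff, mem_ofPred_eq, mem_Ioi, mem_Ioo]
      exact ⟨fun h => ⟨h.2, (ofReal_lt_iff_lt_toReal h.2.le hc).1 h.1⟩,
        fun h => ⟨(ofReal_lt_iff_lt_toReal h.1.le hc).2 h.2, h.1⟩⟩
    rw [this, Real.volume_Ioo, sub_zero, ofReal_toReal hc]

theorem lintegral_eq_lintegral_meas_ofReal_lt (μ : Measure α) [SFinite μ] {g : α → ℝ≥0∞}
    (hg : Measurable g) :
    ∫⁻ a, g a ∂μ = ∫⁻ ℓ in Ioi 0, μ {a | ENNReal.ofReal ℓ < g a} := by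
  have hs : MeasurableSet {q : α × ℝ | ENNReal.ofReal q.2 < g q.1} :=
    measurableSet_lt measurable_snd.ennreal_ofReal (hg.comp measurable_fst)
  calc ∫⁻ a, g a ∂μ
      = ∫⁻ a, volume.restrict (Ioi (0 : ℝ)) {ℓ | ENNReal.ofReal ℓ < g a} ∂μ := by
        simp only [volume_restrict_Ioi_setOf_ofReal_lt]
    _ = (μ.prod (volume.restrict (Ioi 0))) {q | ENNReal.ofReal q.2 < g q.1} :=
        (Measure.prod_apply hs).symm
    _ = _ := Measure.prod_apply_symm hs

theorem lintegral_mul_eq_lintegral_setLIntegral_ofReal_lt (μ : Measure α) [SFinite μ]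
    {w g : α → ℝ≥0∞} (hw : Measurable w) (hg : Measurable g) :
    ∫⁻ a, w a * g a ∂μ = ∫⁻ ℓ in Ioi 0, ∫⁻ a in {a | ENNReal.ofReal ℓ < g a}, w a ∂μ := by
  have h := lintegral_withDensity_eq_lintegral_mul μ hw hg
  simp only [Pi.mul_apply] at h
  rw [← h, lintegral_eq_lintegral_meas_ofReal_lt _ hg]
  exact lintegral_congr fun ℓ => withDensity_apply _ (measurableSet_lt measurable_const hg)

end LayerCake

theorem ENNReal.lt_essSup_iff_measure_ne_zero {β : Type*} [MeasurableSpace β] {ν : Measure β}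
    {f : β → ℝ≥0∞} {c : ℝ≥0∞} : c < essSup f ν ↔ ν {y | c < f y} ≠ 0 := by
  constructor
  · refine fun hc h => hc.not_ge (essSup_le_of_ae_le c (ae_iff.2 ?_))
    simpa only [not_le] using h
  · refine fun h => not_le.1 fun hle => h (measure_mono_null (fun y hy => ?_)
      (meas_essSup_lt (f := f) (μ := ν)))
    exact hle.trans_lt hy

section EssSupSlice

variable {α β : Type*} [MeasurableSpace α] [MeasurableSpace β] {ν : Measure β} [SFinite ν]
  {S : α → Set β} {f : β → ℝ≥0∞}

theorem measurable_essSup_restrict (hS : MeasurableSet {z : α × β | z.2 ∈ S z.1})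
    (hf : Measurable f) : Measurable fun x => essSup f (ν.restrict (S x)) := by
  have hlevel : ∀ c, Measurable fun x => ν.restrict (S x) {y | c < f y} := by
    intro c
    simp_rw [Measure.restrict_apply (measurableSet_lt measurable_const hf), inter_comm]
    exact measurable_measure_prodMk_left (hS.inter (measurableSet_lt measurable_const
      (hf.comp measurable_snd)))
  refine measurable_of_Ioi fun a => ?_
  have h : (fun x => essSup f (ν.restrict (S x))) ⁻¹' Ioi a =
      ⋃ q : ℚ, {_x | a < ENNReal.ofReal q} ∩
        {x | ν.restrict (S x) {y | ENNReal.ofReal q < f y} ≠ 0} := by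
    ext x
    simp only [mem_preimage, mem_Ioi, mem_iUnion, mem_inter_iff, mem_ofPred_eq,
      ← ENNReal.lt_essSup_iff_measure_ne_zero]
    refine ⟨fun hx => ?_, fun ⟨q, haq, hqx⟩ => haq.trans hqx⟩
    obtain ⟨q, -, haq, hqx⟩ := ENNReal.lt_iff_exists_rat_btwn.1 hx
    exact ⟨q, haq, hqx⟩
  rw [h]
  exact .iUnion fun q => (MeasurableSet.const _).inter
    (hlevel _ (measurableSet_singleton 0).compl)

theorem ae_ae_le_essSup_restrict (μ : Measure α) [SFinite μ]
    (hS : MeasurableSet {z : α × β | z.2 ∈ S z.1}) (hf : Measurable f) :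
    ∀ᵐ y ∂ν, ∀ᵐ x ∂μ, y ∈ S x → f y ≤ essSup f (ν.restrict (S x)) := by
  refine (Measure.ae_ae_comm ?_).1 (Eventually.of_forall fun x => ?_)
  · exact hS.imp (measurableSet_le (hf.comp measurable_snd)
      ((measurable_essSup_restrict hS hf).comp measurable_fst))
  · exact (ae_restrict_iff' (measurable_prodMk_left hS)).1 (ENNReal.ae_le_essSup f)

end EssSupSlice

theorem MeasureTheory.Measure.measure_eq_zero_iff_subset_compl_support {X : Type*}
    [TopologicalSpace X] [MeasurableSpace X] [HereditarilyLindelofSpace X] {ν : Measure X}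
    {U : Set X} (hU : IsOpen U) : ν U = 0 ↔ U ⊆ ν.supportᶜ :=
  ⟨Measure.subset_compl_support_of_isOpen hU, fun h => measure_mono_null h
    Measure.measure_compl_support⟩

section CarlesonBox

variable {X : Type*} [PseudoMetricSpace X]

def carlesonBox (x : X) (r : ℝ) : Set (ℝ × X) :=
  Ioo 0 (r ^ 2) ×ˢ ball x r

def parabolicCone (x : X) : Set (ℝ × X) :=
  {p | 0 < p.1 ∧ dist p.2 x < Real.sqrt p.1}

def parabolicTent [MeasurableSpace X] (μ : Measure X) (O : Set X) : Set (ℝ × X) :=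
  {p | 0 < p.1 ∧ μ (ball p.2 (Real.sqrt p.1) \ O) = 0}

theorem exists_countable_pairwiseDisjoint_ball_cover_carlesonBox
    [TopologicalSpace.SeparableSpace X] {ρ : X → ℝ} {R : ℝ} (hR : ∀ y, ρ y ≤ R)
    (hρ : ∀ y z, ρ y ≤ ρ z + dist y z) :
    ∃ u : Set X, u.Countable ∧ u.PairwiseDisjoint (fun b => ball b (ρ b)) ∧
      (∀ b ∈ u, 0 < ρ b) ∧
      {p : ℝ × X | 0 < p.1 ∧ Real.sqrt p.1 ≤ ρ p.2} ⊆ ⋃ b ∈ u, carlesonBox b (6 * ρ b) := by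
  obtain ⟨u, hut, hdisj, hcover⟩ :=
    Vitali.exists_disjoint_subfamily_covering_enlargement_closedBall {y | 0 < ρ y} id ρ R
      (fun y _ => hR y) 4 (by norm_num)
  have hdisj' : u.PairwiseDisjoint (fun b => ball b (ρ b)) :=
    hdisj.mono fun b => ball_subset_closedBall
  refine ⟨u, hdisj'.countable_of_isOpen (fun _ _ => isOpen_ball)
    (fun b hb => nonempty_ball.2 (hut hb)), hdisj', fun b hb => hut hb, ?_⟩
  rintro ⟨t, y⟩ ⟨ht, hty⟩
  have hy : 0 < ρ y := (Real.sqrt_pos.2 ht).trans_le hty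
  obtain ⟨b, hbu, hyb⟩ := hcover y hy
  have hb : 0 < ρ b := hut hbu
  have hdist : dist y b ≤ 4 * ρ b := hyb (mem_closedBall_self hy.le)
  have hρyb : ρ y ≤ 5 * ρ b := by linarith [hρ y b]
  refine mem_biUnion hbu ⟨⟨ht, (Real.sqrt_lt' (by positivity)).1 (by linarith)⟩, ?_⟩
  exact mem_ball.2 (by linarith)

theorem setLIntegral_Ioi_prod_univ_eq_zero [MeasurableSpace X]
    {ν : Measure (ℝ × X)} {F : ℝ × X → ℝ≥0∞} (x₀ : X)
    (hF : ∀ r, 0 < r → ∫⁻ p in carlesonBox x₀ r, F p ∂ν = 0) :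
    ∫⁻ p in Ioi 0 ×ˢ univ, F p ∂ν = 0 := by
  have hcover : Ioi (0 : ℝ) ×ˢ (univ : Set X) ⊆ ⋃ k : ℕ, carlesonBox x₀ (k + 1) := by
    rintro ⟨t, y⟩ ⟨ht, -⟩
    obtain ⟨k, hk⟩ := exists_nat_gt (max t (dist y x₀))
    have hk1 : t < k + 1 := by linarith [le_max_left t (dist y x₀)]
    refine mem_iUnion.2 ⟨k, ⟨ht, ?_⟩, mem_ball.2 (by linarith [le_max_right t (dist y x₀)])⟩
    nlinarith
  refine le_antisymm ((lintegral_mono_set hcover).trans ((lintegral_iUnion_le _ _).trans ?_))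
    zero_le
  simp [hF _ (Nat.cast_add_one_pos _)]

theorem setLIntegral_carlesonBox_le_iSup_mul [MeasurableSpace X] [ProperSpace X]
    (μ : Measure X) [SFinite μ] [μ.IsOpenPosMeasure] [IsFiniteMeasureOnCompacts μ]
    {F : ℝ × X → ℝ≥0∞} (hF : Measurable F) (x : X) {r : ℝ} (hr : 0 < r) :
    ∫⁻ p in carlesonBox x r, F p ∂(volume.prod μ) ≤
      (⨆ (x₀ : X) (r : ℝ) (_ : 0 < r), (μ (ball x₀ r))⁻¹ *
        ∫⁻ t in Ioo 0 (r ^ 2), ∫⁻ y in ball x₀ r, F (t, y) ∂μ) * μ (ball x r) := by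
  rw [carlesonBox, setLIntegral_prod _ hF.aemeasurable, mul_comm,
    ← ENNReal.inv_mul_le_iff (measure_ball_pos _ _ hr).ne' measure_ball_lt_top.ne]
  exact le_iSup_of_le x (le_iSup_of_le r (le_iSup_of_le hr le_rfl))

-- The largest `r` such that `ball y r ⊆ O` up to a null set, as long as `μ Oᶜ ≠ 0`.
noncomputable def tentRadius [MeasurableSpace X] (μ : Measure X) (O : Set X) (y : X) : ℝ :=
  infDist y (μ.restrict Oᶜ).support

section TentRadius

variable [MeasurableSpace X] [HereditarilyLindelofSpace X] {μ : Measure X} {O : Set X}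

theorem measure_ball_diff_eq_zero_iff (hO : MeasurableSet O) {y : X} {r : ℝ} :
    μ (ball y r \ O) = 0 ↔ ball y r ⊆ (μ.restrict Oᶜ).supportᶜ := by
  rw [← Measure.measure_eq_zero_iff_subset_compl_support isOpen_ball,
    Measure.restrict_apply' hO.compl, sdiff_eq]

theorem measure_ball_tentRadius_diff_eq_zero (hO : MeasurableSet O) (y : X) :
    μ (ball y (tentRadius μ O y) \ O) = 0 :=
  (measure_ball_diff_eq_zero_iff hO).2 disjoint_ball_infDist.subset_compl_right

theorem le_tentRadius (hO : MeasurableSet O) (hOc : μ Oᶜ ≠ 0) {y : X} {r : ℝ}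
    (h : μ (ball y r \ O) = 0) : r ≤ tentRadius μ O y := by
  have hK : (μ.restrict Oᶜ).support.Nonempty :=
    Measure.nonempty_support_iff.2 fun h0 => hOc (by simpa using congrArg (· univ) h0)
  exact (le_infDist hK).2 fun z hz =>
    not_lt.1 fun hzy => (measure_ball_diff_eq_zero_iff hO).1 h (mem_ball'.2 hzy) hz

end TentRadius

end CarlesonBox

section Tent

variable {E : Type*} [NormedAddCommGroup E] [NormedSpace ℝ E] [FiniteDimensional ℝ E]
  [MeasurableSpace E] [BorelSpace E] (μ : Measure E) [μ.IsAddHaarMeasure]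

theorem exists_forall_lt_addHaar_ball [Nontrivial E] {c : ℝ≥0∞} (hc : c ≠ ⊤) :
    ∃ R : ℝ, ∀ y : E, c < μ (ball y R) := by
  have hlim : Tendsto (fun k : ℕ => μ (ball (0 : E) k)) atTop (𝓝 ⊤) := by
    have := tendsto_measure_iUnion_atTop (μ := μ)
      (fun i j h => ball_subset_ball (Nat.cast_le.2 h) : Monotone fun k : ℕ => ball (0 : E) k)
    rwa [iUnion_ball_nat, measure_univ_of_isAddLeftInvariant] at this
  obtain ⟨k, hk⟩ := (hlim.eventually (lt_mem_nhds hc.lt_top)).exists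
  exact ⟨k, fun y => by rwa [Measure.addHaar_ball_center]⟩

theorem exists_forall_tentRadius_le [Nontrivial E] {O : Set E} (hO : MeasurableSet O)
    (hOfin : μ O ≠ ⊤) : ∃ R : ℝ, ∀ y, tentRadius μ O y ≤ R := by
  obtain ⟨R, hR⟩ := exists_forall_lt_addHaar_ball μ hOfin
  refine ⟨R, fun y => not_lt.1 fun h => (hR y).not_ge ?_⟩
  exact (measure_mono (ball_subset_ball h.le)).trans
    (measure_mono_ae (ae_le_set.2 (measure_ball_tentRadius_diff_eq_zero hO y)))

theorem setLIntegral_parabolicTent_le_of_measure_ne_top [Nontrivial E] {O : Set E}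
    (hO : MeasurableSet O) (hOfin : μ O ≠ ⊤) {F : ℝ × E → ℝ≥0∞} {A : ℝ≥0∞}
    (hbox : ∀ x r, 0 < r → ∫⁻ p in carlesonBox x r, F p ∂(volume.prod μ) ≤ A * μ (ball x r)) :
    ∫⁻ p in parabolicTent μ O, F p ∂(volume.prod μ) ≤ 6 ^ Module.finrank ℝ E * A * μ O := by
  set ρ := tentRadius μ O
  have hOc : μ Oᶜ ≠ 0 := by
    rw [measure_compl hO hOfin, measure_univ_of_isAddLeftInvariant μ, top_sub hOfin]
    exact top_ne_zero
  obtain ⟨R, hR⟩ := exists_forall_tentRadius_le μ hO hOfin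
  obtain ⟨u, hu, hdisj, hpos, hcover⟩ :=
    exists_countable_pairwiseDisjoint_ball_cover_carlesonBox hR fun y z =>
      infDist_le_infDist_add_dist
  have : Countable u := hu.to_subtype
  have hscale : ∀ b, μ (ball b (6 * ρ b)) = 6 ^ Module.finrank ℝ E * μ (ball b (ρ b)) := by
    intro b
    rw [Measure.addHaar_ball_mul μ b (by norm_num : (0 : ℝ) ≤ 6),
      ← Measure.addHaar_ball_center μ b, ENNReal.ofReal_pow (by norm_num), ENNReal.ofReal_ofNat]
  have hsum : ∑' b : u, μ (ball b (ρ b)) ≤ μ O := by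
    rw [← measure_biUnion hu hdisj fun _ _ => measurableSet_ball]
    refine measure_mono_ae (ae_le_set.2 ?_)
    simp only [iUnion_sdiff]
    exact (measure_biUnion_null_iff hu).2 fun b _ => measure_ball_tentRadius_diff_eq_zero hO b
  rw [biUnion_eq_iUnion] at hcover
  calc ∫⁻ p in parabolicTent μ O, F p ∂(volume.prod μ)
      ≤ ∫⁻ p in ⋃ b : u, carlesonBox (b : E) (6 * ρ b), F p ∂(volume.prod μ) :=
        lintegral_mono_set fun p hp => hcover ⟨hp.1, le_tentRadius hO hOc hp.2⟩
    _ ≤ ∑' b : u, ∫⁻ p in carlesonBox (b : E) (6 * ρ b), F p ∂(volume.prod μ) :=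
        lintegral_iUnion_le _ _
    _ ≤ ∑' b : u, A * μ (ball b (6 * ρ b)) :=
        ENNReal.tsum_le_tsum fun b => hbox _ _ (by linarith [hpos b b.2])
    _ = 6 ^ Module.finrank ℝ E * A * ∑' b : u, μ (ball b (ρ b)) := by
        simp only [hscale, ← ENNReal.tsum_mul_left]
        exact tsum_congr fun b => by ring
    _ ≤ 6 ^ Module.finrank ℝ E * A * μ O := by gcongr

theorem setLIntegral_parabolicTent_le [Nontrivial E] {O : Set E} (hO : MeasurableSet O)
    {F : ℝ × E → ℝ≥0∞} {A : ℝ≥0∞}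
    (hbox : ∀ x r, 0 < r → ∫⁻ p in carlesonBox x r, F p ∂(volume.prod μ) ≤ A * μ (ball x r)) :
    ∫⁻ p in parabolicTent μ O, F p ∂(volume.prod μ) ≤ 6 ^ Module.finrank ℝ E * A * μ O := by
  rcases ne_or_eq (μ O) ⊤ with hOfin | hOtop
  · exact setLIntegral_parabolicTent_le_of_measure_ne_top μ hO hOfin hbox
  rcases eq_or_ne A 0 with rfl | hA
  · have hzero := setLIntegral_Ioi_prod_univ_eq_zero (0 : E) fun r hr =>
      nonpos_iff_eq_zero.1 (by simpa using hbox 0 r hr)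
    calc ∫⁻ p in parabolicTent μ O, F p ∂(volume.prod μ)
        ≤ ∫⁻ p in Ioi 0 ×ˢ univ, F p ∂(volume.prod μ) :=
          lintegral_mono_set fun p hp => ⟨hp.1, mem_univ _⟩
      _ = 0 := hzero
      _ ≤ _ := zero_le
  · simp [hOtop, hA]

theorem setLIntegral_mul_le_mul_lintegral_essSup_parabolicCone [Nontrivial E]
    {F f : ℝ × E → ℝ≥0∞} (hF : Measurable F) (hf : Measurable f) {A : ℝ≥0∞}
    (hbox : ∀ x r, 0 < r → ∫⁻ p in carlesonBox x r, F p ∂(volume.prod μ) ≤ A * μ (ball x r)) :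
    ∫⁻ p in Ioi 0 ×ˢ univ, F p * f p ∂(volume.prod μ) ≤
      6 ^ Module.finrank ℝ E * A *
        ∫⁻ x, essSup f ((volume.prod μ).restrict (parabolicCone x)) ∂μ := by
  set N : E → ℝ≥0∞ := fun x => essSup f ((volume.prod μ).restrict (parabolicCone x))
  have hcone : MeasurableSet {z : E × (ℝ × E) | z.2 ∈ parabolicCone z.1} :=
    (isOpen_lt continuous_const (continuous_fst.comp continuous_snd)).inter
      (isOpen_lt ((continuous_snd.comp continuous_snd).dist continuous_fst)
        (continuous_sqrt.comp (continuous_fst.comp continuous_snd))) |>.measurableSet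
  have hN : Measurable N := measurable_essSup_restrict hcone hf
  have htent : ∀ ℓ : ℝ, ({p | ENNReal.ofReal ℓ < f p} ∩ Ioi 0 ×ˢ univ : Set (ℝ × E))
      ≤ᵐ[volume.prod μ] parabolicTent μ {x | ENNReal.ofReal ℓ < N x} := by
    intro ℓ
    filter_upwards [ae_ae_le_essSup_restrict μ hcone hf] with p hp
    rintro ⟨hℓ, ht, -⟩
    refine ⟨ht, measure_mono_null (fun x hx => ?_) (ae_iff.1 hp)⟩
    exact fun hcone => hx.2 (hℓ.trans_le (hcone ⟨ht, mem_ball'.1 hx.1⟩))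
  have hmono : Antitone fun ℓ : ℝ => μ {x | ENNReal.ofReal ℓ < N x} := fun a b hab =>
    measure_mono fun x hx => (ENNReal.ofReal_le_ofReal hab).trans_lt hx
  calc ∫⁻ p in Ioi 0 ×ˢ univ, F p * f p ∂(volume.prod μ)
      = ∫⁻ ℓ in Ioi 0, ∫⁻ p in {p | ENNReal.ofReal ℓ < f p} ∩ Ioi 0 ×ˢ univ, F p
          ∂(volume.prod μ) := by
        rw [lintegral_mul_eq_lintegral_setLIntegral_ofReal_lt _ hF hf]
        refine lintegral_congr fun ℓ => ?_
        rw [Measure.restrict_restrict (measurableSet_lt measurable_const hf)]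
    _ ≤ ∫⁻ ℓ in Ioi 0, 6 ^ Module.finrank ℝ E * A * μ {x | ENNReal.ofReal ℓ < N x} :=
        lintegral_mono fun ℓ => (lintegral_mono_set' (htent ℓ)).trans
          (setLIntegral_parabolicTent_le μ (measurableSet_lt measurable_const hN) hbox)
    _ = 6 ^ Module.finrank ℝ E * A * ∫⁻ x, N x ∂μ := by
        rw [lintegral_const_mul _ hmono.measurable,
          ← lintegral_eq_lintegral_meas_ofReal_lt μ hN]

end Tent

/-- the parabolic tent-space duality
`∫_0^∞ ∫_{ℝⁿ} |u||v| dt dy ≤ C ‖u‖_{T^{∞,1}_β} ‖v‖_{T^{1,∞}_{−β}}`, with `C = C(n)`,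
where `‖u‖_{T^{∞,1}_β} = sup_B ∫_0^{r(B)²} ⨍_B |t^{−β}u|` and
`‖v‖_{T^{1,∞}_{−β}} = ∫_{ℝⁿ} esssup_{t>0, |y−x|<√t} |t^{β}v(t,y)| dx`
(all quantities taken in `ℝ≥0∞`). -/
theorem stmt9 (n : ℕ) (hn : 1 ≤ n) :
    ∃ C : ℝ≥0∞, C ≠ ⊤ ∧
      ∀ (u v : ℝ → EuclideanSpace ℝ (Fin n) → ℝ) (β : ℝ),
        Measurable (Function.uncurry u) → Measurable (Function.uncurry v) →
        (∫⁻ t in Set.Ioi (0 : ℝ), ∫⁻ y, ENNReal.ofReal (|u t y| * |v t y|))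
          ≤ C *
            (⨆ (x₀ : EuclideanSpace ℝ (Fin n)) (r : ℝ) (_ : 0 < r),
              (volume (ball x₀ r))⁻¹ *
                ∫⁻ t in Set.Ioo (0 : ℝ) (r ^ 2), ∫⁻ y in ball x₀ r,
                  ENNReal.ofReal (t ^ (-β) * |u t y|)) *
            (∫⁻ x, essSup
              (fun p : ℝ × EuclideanSpace ℝ (Fin n) =>
                ENNReal.ofReal (p.1 ^ β * |v p.1 p.2|))
              ((volume : Measure (ℝ × EuclideanSpace ℝ (Fin n))).restrict
                {p | 0 < p.1 ∧ dist p.2 x < Real.sqrt p.1})) := by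
  have : Nontrivial (EuclideanSpace ℝ (Fin n)) :=
    Module.nontrivial_of_finrank_pos (R := ℝ) (by rw [finrank_euclideanSpace_fin]; omega)
  refine ⟨6 ^ n, pow_ne_top ofNat_ne_top, fun u v β hu hv => ?_⟩
  set F : ℝ × EuclideanSpace ℝ (Fin n) → ℝ≥0∞ := fun p =>
    ENNReal.ofReal (p.1 ^ (-β) * |u p.1 p.2|)
  set f : ℝ × EuclideanSpace ℝ (Fin n) → ℝ≥0∞ := fun p =>
    ENNReal.ofReal (p.1 ^ β * |v p.1 p.2|)
  have hF : Measurable F := ((measurable_fst.pow_const _).mul hu.abs).ennreal_ofReal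
  have hf : Measurable f := ((measurable_fst.pow_const _).mul hv.abs).ennreal_ofReal
  have hFf : ∀ t > 0, ∀ y, F (t, y) * f (t, y) = ENNReal.ofReal (|u t y| * |v t y|) := by
    intro t ht y
    have htβ : t ^ β ≠ 0 := (rpow_pos_of_pos ht β).ne'
    rw [← ENNReal.ofReal_mul (mul_nonneg (rpow_nonneg ht.le _) (abs_nonneg _)),
      Real.rpow_neg ht.le]
    congr 1
    field_simp
  have h := setLIntegral_mul_le_mul_lintegral_essSup_parabolicCone volume hF hf
    fun x _ hr => setLIntegral_carlesonBox_le_iSup_mul volume hF x hr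
  rw [finrank_euclideanSpace_fin, setLIntegral_prod (fun p => F p * f p) (hF.mul hf).aemeasurable,
    Measure.restrict_univ] at h
  refine le_of_eq_of_le (setLIntegral_congr_fun measurableSet_Ioi fun t ht =>
    lintegral_congr fun y => (hFf t ht y).symm) h
end
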